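/- arXiv:2508.01470 — 4 statements merged into one kernel-verified Lean document; each statement's English description precedes it below -/
import Mathlib

section
/- Any maximal pairwise anticommuting subset A of a Pauli group (a subgroup of the n-qubit Pauli group consisting of ± Pauli strings) has odd cardinality. -/
/-!
If `#A` were even, the product `g` of the elements of `A`, taken in any order, would anticommute
with every `h ∈ A`: moving `h` across `g`, it passes itself once and `#A - 1` elements that
anticommute with it. By maximality `g` or `-g` lies in `A`, so `g` anticommutes with itself and
`g * g = -(g * g)`; but every `±` Pauli string squares to `1`.
-/

/-- The Pauli matrices `σ₀ = I, σ₁ = X, σ₂ = Y, σ₃ = Z`. -/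
def pauliMat : Fin 4 → Matrix (Fin 2) (Fin 2) ℂ :=
  ![1, !![0, 1; 1, 0], !![0, -Complex.I; Complex.I, 0], !![1, 0; 0, -1]]

/-- The `n`-qubit Pauli string `σ_{a 0} ⊗ ⋯ ⊗ σ_{a (n-1)}`, as an operator on
`(ℂ²)^{⊗ n}`, realized as a matrix indexed by `Fin n → Fin 2`. -/
def pauliString (n : ℕ) (a : Fin n → Fin 4) :
    Matrix (Fin n → Fin 2) (Fin n → Fin 2) ℂ :=
  Matrix.of fun f g => ∏ k, pauliMat (a k) (f k) (g k)

theorem Matrix.of_prod_mul_of_prod {ι α β γ R : Type*} [Fintype ι] [DecidableEq ι] [Fintype β]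
    [CommSemiring R] (M : ι → Matrix α β R) (N : ι → Matrix β γ R) :
    Matrix.of (fun (f : ι → α) (g : ι → β) => ∏ k, M k (f k) (g k)) *
        Matrix.of (fun (f : ι → β) (g : ι → γ) => ∏ k, N k (f k) (g k)) =
      Matrix.of (fun (f : ι → α) (g : ι → γ) => ∏ k, (M k * N k) (f k) (g k)) := by
  ext f g
  simp only [Matrix.mul_apply, Matrix.of_apply, ← Finset.prod_mul_distrib]
  exact (Fintype.prod_sum fun k j => M k (f k) j * N k j (g k)).symm

theorem Matrix.of_prod_one {ι κ R : Type*} [Fintype ι] [DecidableEq κ] [CommSemiring R] :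
    Matrix.of (fun f g : ι → κ => ∏ k, (1 : Matrix κ κ R) (f k) (g k)) = 1 := by
  ext f g
  simp only [Matrix.of_apply, Matrix.one_apply, Finset.prod_boole, Finset.mem_univ, true_implies,
    funext_iff]

theorem pauliMat_mul_self (i : Fin 4) : pauliMat i * pauliMat i = 1 := by
  fin_cases i <;> simp [pauliMat, Matrix.one_fin_two]

theorem pauliString_mul_self (n : ℕ) (a : Fin n → Fin 4) :
    pauliString n a * pauliString n a = 1 := by
  simp only [pauliString, Matrix.of_prod_mul_of_prod, pauliMat_mul_self, Matrix.of_prod_one]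

theorem smul_pauliString_mul_self {n : ℕ} {ε : ℂ} (hε : ε = 1 ∨ ε = -1) (a : Fin n → Fin 4) :
    ε • pauliString n a * (ε • pauliString n a) = 1 := by
  rw [smul_mul_smul_comm, pauliString_mul_self]
  rcases hε with rfl | rfl <;> simp

instance Matrix.instIsAddTorsionFree {m n R : Type*} [AddMonoid R] [IsAddTorsionFree R] :
    IsAddTorsionFree (Matrix m n R) :=
  inferInstanceAs (IsAddTorsionFree (m → n → R))

section Anticommute

variable {R : Type*} [Ring R]

theorem mul_list_prod_of_forall_anticommute {h : R} {l : List R}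
    (hl : ∀ x ∈ l, h * x = -(x * h)) :
    h * l.prod = (-1 : ℤ) ^ l.length • (l.prod * h) := by
  induction l with
  | nil => simp
  | cons x t ih =>
    rw [List.forall_mem_cons] at hl
    rw [List.prod_cons, ← mul_assoc, hl.1, neg_mul, mul_assoc, ih hl.2, List.length_cons, pow_succ,
      mul_smul_comm, mul_smul, neg_one_smul, mul_assoc, smul_neg]

theorem mul_list_prod_of_anticommute_of_mem {h : R} {l : List R} (hnd : l.Nodup) (hh : h ∈ l)
    (hl : ∀ x ∈ l, x ≠ h → h * x = -(x * h)) :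
    h * l.prod = (-1 : ℤ) ^ (l.length - 1) • (l.prod * h) := by
  obtain ⟨s, t, rfl⟩ := List.append_of_mem hh
  obtain ⟨hs, ht⟩ : h ∉ s ∧ h ∉ t := by
    simpa [not_or] using (List.nodup_cons.1 (List.nodup_middle.1 hnd)).1
  have hs' := mul_list_prod_of_forall_anticommute fun x hx =>
    hl x (by simp [hx]) (ne_of_mem_of_not_mem hx hs)
  have ht' := mul_list_prod_of_forall_anticommute fun x hx =>
    hl x (by simp [hx]) (ne_of_mem_of_not_mem hx ht)
  calc h * (s ++ h :: t).prod = (h * s.prod) * (h * t.prod) := by simp [mul_assoc]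
    _ = (-1 : ℤ) ^ (s.length + t.length) • (s.prod * h * t.prod * h) := by
      rw [hs', ht', smul_mul_smul_comm, ← pow_add]; simp only [mul_assoc]
    _ = (-1 : ℤ) ^ ((s ++ h :: t).length - 1) • ((s ++ h :: t).prod * h) := by
      simp [mul_assoc]

theorem Finset.list_prod_toList_anticommute_of_even_card {A : Finset R} (hA : Even A.card)
    (hanti : ∀ g ∈ A, ∀ h ∈ A, g ≠ h → g * h = -(h * g)) {h : R} (hh : h ∈ A) :
    A.toList.prod * h = -(h * A.toList.prod) := by
  have hodd : Odd (A.card - 1) := Nat.Even.sub_odd (Finset.card_pos.2 ⟨h, hh⟩) hA odd_one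
  rw [mul_list_prod_of_anticommute_of_mem A.nodup_toList (Finset.mem_toList.2 hh)
    (fun x hx hxh => hanti h hh x (Finset.mem_toList.1 hx) hxh.symm), Finset.length_toList,
    hodd.neg_one_pow, neg_one_smul, neg_neg]

end Anticommute

/-- Any maximal pairwise anticommuting subset `A` of a Pauli group (a subgroup `G` of the
`n`-qubit Pauli group consisting of `±` Pauli strings) has odd cardinality. -/
theorem maximal_anticommuting_subset_odd_card (n : ℕ)
    (G : Set (Matrix (Fin n → Fin 2) (Fin n → Fin 2) ℂ))
    -- G consists of ± Pauli strings
    (hGP : ∀ g ∈ G, ∃ (ε : ℂ) (a : Fin n → Fin 4), (ε = 1 ∨ ε = -1) ∧ g = ε • pauliString n a)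
    -- G is a subgroup: contains identity and is closed under multiplication
    (hone : (1 : Matrix (Fin n → Fin 2) (Fin n → Fin 2) ℂ) ∈ G)
    (hmul : ∀ g ∈ G, ∀ h ∈ G, g * h ∈ G)
    (A : Finset (Matrix (Fin n → Fin 2) (Fin n → Fin 2) ℂ))
    (hAG : ↑A ⊆ G)
    -- all distinct elements of A anticommute
    (hanti : ∀ g ∈ A, ∀ h ∈ A, g ≠ h → g * h = -(h * g))
    -- maximality: no element of G \ (±A) anticommutes with every element of A
    (hmax : ∀ g ∈ G, g ∉ A → -g ∉ A → ¬(∀ h ∈ A, g * h = -(h * g))) :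
    Odd A.card := by
  by_contra heven
  rw [Nat.not_odd_iff_even] at heven
  set g := A.toList.prod
  have hgG : g ∈ G := (⟨⟨G, fun hg hh => hmul _ hg _ hh⟩, hone⟩ : Submonoid _).list_prod_mem
    fun x hx => hAG (Finset.mem_toList.1 hx)
  have hgA : ∀ h ∈ A, g * h = -(h * g) := fun h hh =>
    Finset.list_prod_toList_anticommute_of_even_card heven hanti hh
  have hgg : g * g = -(g * g) := by
    by_cases hg : g ∈ A
    · exact hgA g hg
    · have hng : -g ∈ A := by_contra fun hng => hmax g hgG hg hng hgA
      simpa using (hgA (-g) hng).symm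
  obtain ⟨ε, a, hε, hga⟩ := hGP g hgG
  have hgg_one : g * g = 1 := hga ▸ smul_pauliString_mul_self hε a
  exact one_ne_zero (hgg_one ▸ self_eq_neg.1 hgg)
end

section
/- With the splitting transformation y_i defined as in the splitting algorithm (splitting the anticommuting pair x₁, x₂), for i, j ≥ 3: if x_i commutes with both x₁ and x₂, then y_i commutes with y_j if and only if x_i commutes with x_j. -/
private lemma lcancel {A : Type*} [Ring A] [Algebra ℂ A] {a : A} {c : ℂ}
    (hc : c ≠ 0) (hsq : a * a = algebraMap ℂ A c) {u v : A} :
    a * u = a * v ↔ u = v := by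
  constructor
  · intro h
    have h2 : (a * a) * u = (a * a) * v := by rw [mul_assoc, mul_assoc, h]
    rw [hsq] at h2
    have h3 : c • u = c • v := by simpa [Algebra.smul_def] using h2
    have := congrArg (fun w => c⁻¹ • w) h3
    simpa [inv_smul_smul₀ hc] using this
  · intro h; rw [h]

/-- Splitting the anticommuting pair `(a, b) = (x₁, x₂)` in a quasi-Clifford algebra:
if `x i` commutes with both `a` and `b` (so `y i = x i`), then `y i` commutes with
`y j` if and only if `x i` commutes with `x j`. -/
theorem splitting_preserves_relation {A : Type*} [Ring A] [Algebra ℂ A] (m : ℕ)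
    (a b : A)
    (ha : ∃ c : ℂ, c ≠ 0 ∧ a * a = algebraMap ℂ A c)
    (hb : ∃ c : ℂ, c ≠ 0 ∧ b * b = algebraMap ℂ A c)
    (hab : a * b = -(b * a))
    (x : Fin m → A)
    (hsq : ∀ k, ∃ c : ℂ, c ≠ 0 ∧ x k * x k = algebraMap ℂ A c)
    (hcomm : ∀ k l, x k * x l = x l * x k ∨ x k * x l = -(x l * x k))
    (hca : ∀ k, x k * a = a * x k ∨ x k * a = -(a * x k))
    (hcb : ∀ k, x k * b = b * x k ∨ x k * b = -(b * x k))
    (i j : Fin m)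
    -- x i commutes with both a and b, hence y i = x i
    (hia : x i * a = a * x i) (hib : x i * b = b * x i)
    (yj : A)
    -- y j is given by the four-case splitting rule applied to x j
    (hyj : (x j * a = a * x j ∧ x j * b = b * x j ∧ yj = x j) ∨
           (x j * a = a * x j ∧ x j * b = -(b * x j) ∧ yj = a * x j) ∨
           (x j * a = -(a * x j) ∧ x j * b = b * x j ∧ yj = b * x j) ∨
           (x j * a = -(a * x j) ∧ x j * b = -(b * x j) ∧ yj = a * b * x j)) :
    x i * yj = yj * x i ↔ x i * x j = x j * x i := by
  obtain ⟨ca, hca0, hasq⟩ := ha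
  obtain ⟨cb, hcb0, hbsq⟩ := hb
  rcases hyj with ⟨_, _, rfl⟩ | ⟨_, _, rfl⟩ | ⟨_, _, rfl⟩ | ⟨_, _, rfl⟩
  · rfl
  · have l1 : x i * (a * x j) = a * (x i * x j) := by
      rw [← mul_assoc, hia, mul_assoc]
    have l2 : (a * x j) * x i = a * (x j * x i) := by rw [mul_assoc]
    rw [l1, l2, lcancel hca0 hasq]
  · have l1 : x i * (b * x j) = b * (x i * x j) := by
      rw [← mul_assoc, hib, mul_assoc]
    have l2 : (b * x j) * x i = b * (x j * x i) := by rw [mul_assoc]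
    rw [l1, l2, lcancel hcb0 hbsq]
  · have l1 : x i * (a * b * x j) = a * (b * (x i * x j)) := by
      rw [show x i * (a * b * x j) = x i * a * (b * x j) by rw [mul_assoc, mul_assoc],
        hia, mul_assoc, ← mul_assoc (x i), hib, mul_assoc]
    have l2 : (a * b * x j) * x i = a * (b * (x j * x i)) := by
      simp [mul_assoc]
    rw [l1, l2, lcancel hca0 hasq, lcancel hcb0 hbsq]
end

section
/- With the splitting transformation as in the splitting algorithm, if x_i anticommutes with x₁ and commutes with x₂, and x_j commutes with x₁ and anticommutes with x₂ (i, j ≥ 3), then y_i commutes with y_j if and only if x_i anticommutes with x_j (the relation inverts). -/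
/-- Splitting the anticommuting pair `(a, b) = (x₁, x₂)` in a quasi-Clifford algebra:
if `x i` anticommutes with `a` and commutes with `b` (so `y i = b * x i`), and
`x j` commutes with `a` and anticommutes with `b` (so `y j = a * x j`), then
`y i` commutes with `y j` if and only if `x i` anticommutes with `x j`
(the relation inverts). -/
theorem splitting_inverts_relation {A : Type*} [Ring A] [Algebra ℂ A] (m : ℕ)
    (a b : A)
    (ha : ∃ c : ℂ, c ≠ 0 ∧ a * a = algebraMap ℂ A c)
    (hb : ∃ c : ℂ, c ≠ 0 ∧ b * b = algebraMap ℂ A c)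
    (hab : a * b = -(b * a))
    (x : Fin m → A)
    (hsq : ∀ k, ∃ c : ℂ, c ≠ 0 ∧ x k * x k = algebraMap ℂ A c)
    (hcomm : ∀ k l, x k * x l = x l * x k ∨ x k * x l = -(x l * x k))
    (i j : Fin m)
    -- x i anticommutes with a and commutes with b
    (hia : x i * a = -(a * x i)) (hib : x i * b = b * x i)
    -- x j commutes with a and anticommutes with b
    (hja : x j * a = a * x j) (hjb : x j * b = -(b * x j)) :
    (b * x i) * (a * x j) = (a * x j) * (b * x i) ↔ x i * x j = -(x j * x i) := by
  obtain ⟨ca, hca, ha2⟩ := ha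
  obtain ⟨cb, hcb, hb2⟩ := hb
  -- inverses of a and b
  set aInv : A := algebraMap ℂ A ca⁻¹ * a with haInv
  set bInv : A := algebraMap ℂ A cb⁻¹ * b with hbInv
  have haInv_a : aInv * a = 1 := by
    rw [haInv, mul_assoc, ha2, ← map_mul, inv_mul_cancel₀ hca, map_one]
  have hbInv_b : bInv * b = 1 := by
    rw [hbInv, mul_assoc, hb2, ← map_mul, inv_mul_cancel₀ hcb, map_one]
  -- rewrite both sides as (a*b) * _
  have lhs : (b * x i) * (a * x j) = a * (b * (x i * x j)) := by
    calc (b * x i) * (a * x j) = b * (x i * a) * x j := by noncomm_ring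
    _ = b * (-(a * x i)) * x j := by rw [hia]
    _ = -(b * a) * (x i * x j) := by noncomm_ring
    _ = a * b * (x i * x j) := by rw [← hab]
    _ = a * (b * (x i * x j)) := by noncomm_ring
  have rhs : (a * x j) * (b * x i) = -(a * (b * (x j * x i))) := by
    calc (a * x j) * (b * x i) = a * (x j * b) * x i := by noncomm_ring
    _ = a * (-(b * x j)) * x i := by rw [hjb]
    _ = -(a * b * (x j * x i)) := by noncomm_ring
    _ = -(a * (b * (x j * x i))) := by noncomm_ring
  rw [lhs, rhs]
  constructor
  · intro h
    have h2 : a * (b * (x i * x j)) = a * (b * (-(x j * x i))) := by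
      rw [h]; noncomm_ring
    have cancel : ∀ u : A, bInv * (aInv * (a * (b * u))) = u := fun u => by
      rw [← mul_assoc aInv, haInv_a, one_mul, ← mul_assoc, hbInv_b, one_mul]
    have h3 := congrArg (fun z => bInv * (aInv * z)) h2
    simpa only [cancel] using h3
  · intro h
    rw [h]; noncomm_ring
end

section
/- For pairwise anticommuting elements x₁,…,x_m each squaring to ±1, define z₁ = x₁, z₂ = x₂, and for i ≥ 3: z_i = (x₁⋯x_{i-1})x_i if i is odd and z_i = (x₁⋯x_{i-2})x_i if i is even. Then z_{2j-1} and z_{2j} anticommute for each j, while z_i commutes with z_k whenever {i,k} is not such a consecutive odd-even pair. -/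
/-!
Moving a generator `x t` across a product of `n` generators costs the sign `(-1) ^ (n + c)`,
where `c` counts the occurrences of `x t` in the product. Write `z i = p * x i` with `p` the
product of the first `2 * (i / 2)` generators. Within a block both `x i` and `x j` commute with
the common even-length prefix `p`, so `z i` and `z j` anticommute exactly as `x i` and `x j` do.
If `i` lies in an earlier block than `j`, every generator of `z i` occurs once in the even-length
prefix of `z j` and anticommutes with `x j`, hence commutes with `z j`.
-/

section Anticommuting

variable {ι A : Type*} [DecidableEq ι] [Ring A] {x : ι → A}

theorem mul_prod_map_eq_neg_one_pow_mul (hanti : ∀ i j, i ≠ j → x i * x j = -(x j * x i))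
    (t : ι) (l : List ι) :
    x t * (l.map x).prod = (-1) ^ (l.length + l.count t) * ((l.map x).prod * x t) := by
  induction l with
  | nil => simp
  | cons k l ih =>
    have hsign := ((Commute.neg_one_left (x k)).pow_left (l.length + l.count t)).eq
    rw [List.map_cons, List.prod_cons, List.length_cons, List.count_cons]
    by_cases hk : k = t
    · subst hk
      calc x k * (x k * (l.map x).prod)
          = (-1) ^ (l.length + l.count k) * x k * ((l.map x).prod * x k) := by
            rw [ih, ← mul_assoc, hsign]
        _ = _ := by simp [pow_add, pow_succ, mul_assoc]
    · rw [← mul_assoc, hanti t k (Ne.symm hk), neg_mul, mul_assoc, ih, ← mul_assoc, ← hsign]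
      simp [hk, pow_add, mul_assoc]

theorem commute_prod_map_of_even (hanti : ∀ i j, i ≠ j → x i * x j = -(x j * x i))
    {t : ι} {l : List ι} (h : Even (l.length + l.count t)) : Commute (x t) (l.map x).prod := by
  rw [Commute, SemiconjBy, mul_prod_map_eq_neg_one_pow_mul hanti, h.neg_one_pow, one_mul]

theorem mul_prod_map_mul_anticomm (hanti : ∀ i j, i ≠ j → x i * x j = -(x j * x i))
    {l : List ι} (hl : Even l.length) {i j : ι} (hi : i ∉ l) (hj : j ∉ l) (hij : i ≠ j) :
    (l.map x).prod * x i * ((l.map x).prod * x j)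
      = -((l.map x).prod * x j * ((l.map x).prod * x i)) := by
  set p := (l.map x).prod
  have hpi : x i * p = p * x i :=
    commute_prod_map_of_even hanti (by rwa [List.count_eq_zero_of_not_mem hi])
  have hpj : x j * p = p * x j :=
    commute_prod_map_of_even hanti (by rwa [List.count_eq_zero_of_not_mem hj])
  calc p * x i * (p * x j) = p * p * (x i * x j) := by
        rw [mul_assoc, ← mul_assoc (x i), hpi]; noncomm_ring
    _ = -(p * x j * (p * x i)) := by
        rw [hanti i j hij, mul_assoc p (x j), ← mul_assoc (x j), hpj]; noncomm_ring

theorem commute_mul_prod_map_mul (hanti : ∀ i j, i ≠ j → x i * x j = -(x j * x i))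
    {l : List ι} (hl : l.Nodup) (heven : Even l.length) {t j : ι} (ht : t ∈ l) (hj : j ∉ l) :
    Commute (x t) ((l.map x).prod * x j) := by
  have hsign : x t * (l.map x).prod = -((l.map x).prod * x t) := by
    rw [mul_prod_map_eq_neg_one_pow_mul hanti, List.count_eq_one_of_mem hl ht,
      (heven.add_one).neg_one_pow, neg_one_mul]
  have htj : t ≠ j := by rintro rfl; exact hj ht
  rw [Commute, SemiconjBy, ← mul_assoc, hsign, neg_mul, mul_assoc, hanti t j htj, mul_neg,
    neg_neg, mul_assoc]

end Anticommuting

theorem length_filter_finRange_val_lt {m c : ℕ} (h : c ≤ m) :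
    ((List.finRange m).filter (fun k : Fin m => k.val < c)).length = c := by
  rw [← List.toFinset_card_of_nodup ((List.nodup_finRange m).filter _), List.toFinset_filter,
    List.toFinset_finRange]
  simp [Fin.card_filter_val_lt, h]

theorem reduced_basis_commutation_general {A : Type*} [Ring A] (m : ℕ)
    (x : Fin m → A)
    (hanti : ∀ i j, i ≠ j → x i * x j = -(x j * x i))
    (z : Fin m → A)
    (hz : ∀ i : Fin m, z i =
      (((List.finRange m).filter
          (fun k => k.val < if i.val % 2 = 0 then i.val else i.val - 1)).map x).prod * x i) :
    (∀ i j : Fin m, i ≠ j → i.val / 2 = j.val / 2 → z i * z j = -(z j * z i)) ∧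
    (∀ i j : Fin m, i.val / 2 ≠ j.val / 2 → z i * z j = z j * z i) := by
  set P : ℕ → List (Fin m) := fun c => (List.finRange m).filter (fun k => k.val < c)
  have hzP (i : Fin m) : z i = ((P (2 * (i.val / 2))).map x).prod * x i := by
    rw [hz i, show (if i.val % 2 = 0 then i.val else i.val - 1) = 2 * (i.val / 2) by
      split <;> omega]
  have hmemP {c : ℕ} {t : Fin m} : t ∈ P c ↔ t.val < c := by simp [P]
  have hevenP (i : Fin m) : Even (P (2 * (i.val / 2))).length := by
    rw [length_filter_finRange_val_lt (by omega)]; exact even_two_mul _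
  refine ⟨fun i j hij hblock => ?_, fun i j hblock => ?_⟩
  · rw [hzP i, hzP j, hblock]
    exact mul_prod_map_mul_anticomm hanti (hblock ▸ hevenP i) (by rw [hmemP]; omega)
      (by rw [hmemP]; omega) hij
  · wlog hlt : i.val / 2 < j.val / 2 generalizing i j
    · exact (this j i (Ne.symm hblock) (by omega)).symm
    rw [hzP i, hzP j]
    have hcomm (t : Fin m) (ht : t.val ≤ i.val) :
        Commute (x t) (((P (2 * (j.val / 2))).map x).prod * x j) :=
      commute_mul_prod_map_mul hanti ((List.nodup_finRange m).filter _) (hevenP j)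
        (hmemP.mpr (by omega)) (by rw [hmemP]; omega)
    refine (Commute.mul_left (Commute.list_prod_left _ _ ?_) (hcomm i le_rfl)).eq
    simp only [List.mem_map]
    rintro _ ⟨t, ht, rfl⟩
    exact hcomm t (by rw [hmemP] at ht; omega)

/-- For pairwise anticommuting `x₁, …, x_m` each squaring to `±1`, the Wedderburn-reduced
basis `z₁ = x₁`, `z₂ = x₂`, `z_i = (x₁⋯x_{i-1})x_i` for odd `i ≥ 3` and
`z_i = (x₁⋯x_{i-2})x_i` for even `i ≥ 4` (here written 0-indexed) satisfies:
`z_{2j-1}` and `z_{2j}` anticommute for each `j`, and `z_i` commutes with `z_k` whenever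
`{i,k}` is not such a consecutive odd-even pair. -/
theorem reduced_basis_commutation {A : Type*} [Ring A] [Algebra ℂ A] (m : ℕ)
    (x : Fin m → A)
    (hsq : ∀ i, x i * x i = 1 ∨ x i * x i = -1)
    (hanti : ∀ i j, i ≠ j → x i * x j = -(x j * x i))
    (z : Fin m → A)
    (hz : ∀ i : Fin m, z i =
      (((List.finRange m).filter
          (fun k => k.val < if i.val % 2 = 0 then i.val else i.val - 1)).map x).prod * x i) :
    (∀ i j : Fin m, i ≠ j → i.val / 2 = j.val / 2 → z i * z j = -(z j * z i)) ∧
    (∀ i j : Fin m, i.val / 2 ≠ j.val / 2 → z i * z j = z j * z i) :=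
  reduced_basis_commutation_general m x hanti z hz
end
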